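/- Fix a real a > 0 and integers m ≥ 0 and ℓ ≥ 0. Then, with the limit taken over integers n > ℓ+1 tending to infinity, lim_{n→∞} n^{−m}·(d^m/dx^m)[F_{n,ℓ}(a;x) − F_{n,ℓ+1}(a;x)] evaluated at x = a equals (−1)^ℓ·(m choose ℓ), where the binomial coefficient (m choose ℓ) is 0 whenever ℓ > m, and the m-th derivative is that of the smooth function x ↦ F_{n,ℓ}(a;x) − F_{n,ℓ+1}(a;x) on ℝ. -/

import Mathlib

/-!
`F_{n,ℓ} − F_{n,ℓ+1}` is the binomial probability `C(n,ℓ) p^ℓ (1 − p)^(n−ℓ)` with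
`p = 1 − e^{−(a−x)}`, i.e. the exponential sum `Σ_i C(n,ℓ) C(ℓ,i) (−1)^i e^{−(n−ℓ+i)(a−x)}`.
Its `m`-th derivative at `x = a` is therefore `C(n,ℓ) Σ_i C(ℓ,i) (−1)^i (n−ℓ+i)^m`, which is
`(−1)^ℓ C(n,ℓ) Δ^ℓ[x^m](n − ℓ)` for the forward difference `Δ`. Expanding `(n + y)^m` in powers
of `n`, the coefficient of `n^(m−j)` is `C(m,j) Δ^ℓ[x^j](−ℓ)`, which vanishes for `j < ℓ` and is
`ℓ!` for `j = ℓ`. As `C(n,ℓ) ~ n^ℓ/ℓ!`, after division by `n^m` only the term `j = ℓ` survives.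
-/

open Filter

/-- `f_{n,ℓ}(y;x)`: the density at `y` of the `ℓ`-th order statistic of `n` i.i.d.
unit-rate exponential random variables conditioned to exceed `x`. -/
noncomputable def amsDensity (n ℓ : ℕ) (x y : ℝ) : ℝ :=
  (ℓ : ℝ) * (n.choose ℓ) * (1 - Real.exp (-(y - x))) ^ (ℓ - 1) *
    Real.exp (-((n : ℝ) - ℓ + 1) * (y - x))

/-- `F_{n,ℓ}(a;x)`, with the convention `F_{n,0}(a;x) = 1`. -/
noncomputable def amsCDF (n ℓ : ℕ) (a x : ℝ) : ℝ :=
  if ℓ = 0 then 1 else ∫ u in (0 : ℝ)..(a - x), amsDensity n ℓ 0 u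

open Real Finset Topology
open scoped Nat fwdDiff

lemma sum_choose_mul_neg_one_pow_mul_shift {R : Type*} [CommRing R] (f : R → R) (ℓ : ℕ)
    (y : R) :
    ∑ i ∈ range (ℓ + 1), ℓ.choose i * (-1) ^ i * f (y + i) = (-1) ^ ℓ * Δ_[1] ^[ℓ] f y := by
  rw [fwdDiff_iter_eq_sum_shift, mul_sum]
  refine sum_congr rfl fun i _ => ?_
  have hsign : (-1 : R) ^ ℓ * (-1) ^ (ℓ - i) = (-1) ^ i := by
    rw [← pow_add, show ℓ + (ℓ - i) = 2 * (ℓ - i) + i by grind, pow_add, pow_mul]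
    simp
  rw [zsmul_eq_mul, nsmul_one]
  push_cast
  rw [← hsign]
  ring

lemma fwdDiff_iter_pow_add {R : Type*} [CommRing R] (ℓ m : ℕ) (y t : R) :
    Δ_[1] ^[ℓ] (fun x : R => x ^ m) (y + t) =
      ∑ j ∈ range (m + 1), m.choose j * t ^ (m - j) * Δ_[1] ^[ℓ] (fun x : R => x ^ j) y := by
  have hexpand : (fun x : R => (x + t) ^ m) =
      ∑ j ∈ range (m + 1), (m.choose j * t ^ (m - j)) • fun x : R => x ^ j := by
    funext x
    rw [add_pow, Finset.sum_apply]
    exact sum_congr rfl fun j _ => by simp only [Pi.smul_apply, smul_eq_mul]; ring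
  rw [← fwdDiff_iter_comp_add, hexpand, fwdDiff_iter_finsetSum, Finset.sum_apply]
  simp only [fwdDiff_iter_const_smul, Pi.smul_apply, smul_eq_mul]

lemma tendsto_choose_div_pow_self (ℓ : ℕ) :
    Tendsto (fun n : ℕ => (n.choose ℓ : ℝ) / (n : ℝ) ^ ℓ) atTop (𝓝 (ℓ ! : ℝ)⁻¹) := by
  have h := (isEquivalent_choose ℓ).div
    (Asymptotics.IsEquivalent.refl (u := fun n : ℕ => (n : ℝ) ^ ℓ))
  refine h.tendsto_nhds_iff.mpr (tendsto_const_nhds.congr' ?_)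
  filter_upwards [eventually_ne_atTop 0] with n hn
  simp only [Pi.div_apply]
  field_simp

lemma tendsto_choose_div_pow_of_lt {ℓ j : ℕ} (h : ℓ < j) :
    Tendsto (fun n : ℕ => (n.choose ℓ : ℝ) / (n : ℝ) ^ j) atTop (𝓝 0) := by
  have hpow : Tendsto (fun n : ℕ => ((n : ℝ) ^ (j - ℓ))⁻¹) atTop (𝓝 0) :=
    ((tendsto_pow_atTop (by omega)).comp tendsto_natCast_atTop_atTop).inv_tendsto_atTop
  have hprod := (tendsto_choose_div_pow_self ℓ).mul hpow
  rw [mul_zero] at hprod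
  refine hprod.congr fun n => ?_
  rw [← div_eq_mul_inv, div_div, ← pow_add, Nat.add_sub_of_le h.le]

lemma tendsto_fwdDiff_iter_pow_mul_choose_div_pow (ℓ j : ℕ) (y : ℝ) :
    Tendsto (fun n : ℕ => Δ_[1] ^[ℓ] (fun x : ℝ => x ^ j) y * ((n.choose ℓ : ℝ) / (n : ℝ) ^ j))
      atTop (𝓝 (if j = ℓ then 1 else 0)) := by
  rcases lt_trichotomy j ℓ with h | rfl | h
  · simp [fwdDiff_iter_pow_eq_zero_of_lt h, h.ne]
  · have h := (tendsto_choose_div_pow_self j).const_mul (j ! : ℝ)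
    rw [mul_inv_cancel₀ (by positivity)] at h
    simpa [fwdDiff_iter_eq_factorial] using h
  · simpa [h.ne'] using (tendsto_choose_div_pow_of_lt h).const_mul _

lemma iteratedDeriv_sum_mul_exp {ι : Type*} (s : Finset ι) (A c : ι → ℝ) (m : ℕ) (x : ℝ) :
    iteratedDeriv m (fun x => ∑ i ∈ s, A i * exp (c i * x)) x =
      ∑ i ∈ s, A i * c i ^ m * exp (c i * x) := by
  rw [iteratedDeriv_fun_sum fun i _ => by fun_prop]
  simp [iteratedDeriv_const_mul_field, mul_assoc]

lemma cast_choose_succ_mul (n ℓ : ℕ) :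
    (n.choose (ℓ + 1) : ℝ) * (ℓ + 1) = n.choose ℓ * (n - ℓ) := by
  rcases le_or_gt ℓ n with h | h
  · have := congrArg (Nat.cast (R := ℝ)) (Nat.choose_succ_right_eq n ℓ)
    push_cast [Nat.cast_sub h] at this
    exact this
  · simp [Nat.choose_eq_zero_of_lt h, Nat.choose_eq_zero_of_lt (h.trans (Nat.lt_succ_self ℓ))]

/-- The probability that exactly `ℓ` of the `n` exponentials conditioned to exceed `x` are at
most `x + b`. -/
noncomputable def amsExactProb (n ℓ : ℕ) (b : ℝ) : ℝ :=
  n.choose ℓ * (1 - exp (-b)) ^ ℓ * exp (-(n - ℓ) * b)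

lemma hasDerivAt_amsExactProb (n ℓ : ℕ) (b : ℝ) :
    HasDerivAt (amsExactProb n ℓ) (amsDensity n ℓ 0 b - amsDensity n (ℓ + 1) 0 b) b := by
  have hpow : HasDerivAt (fun b => (1 - exp (-b)) ^ ℓ)
      (ℓ * (1 - exp (-b)) ^ (ℓ - 1) * exp (-b)) b := by
    simpa using ((hasDerivAt_neg b).exp.const_sub 1).fun_pow ℓ
  have hexp : HasDerivAt (fun b => exp (-(n - ℓ) * b)) (exp (-(n - ℓ) * b) * (-(n - ℓ))) b := by
    simpa using ((hasDerivAt_id b).const_mul (-((n : ℝ) - ℓ))).exp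
  have hsplit : exp (-(n - ℓ + 1) * b) = exp (-b) * exp (-(n - ℓ) * b) := by
    rw [← exp_add]; ring_nf
  refine ((hpow.fun_mul hexp).const_mul (n.choose ℓ : ℝ)).congr_deriv ?_
    |>.congr_of_eventuallyEq (.of_eq (funext fun b => mul_assoc _ _ _))
  simp only [amsDensity, sub_zero, Nat.cast_add, Nat.cast_one, add_tsub_cancel_right]
  rw [show -((n : ℝ) - (ℓ + 1) + 1) * b = -(n - ℓ) * b by ring, hsplit]
  linear_combination (1 - exp (-b)) ^ ℓ * exp (-(n - ℓ) * b) * cast_choose_succ_mul n ℓ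

lemma amsCDF_eq_integral_add (n ℓ : ℕ) (a x : ℝ) :
    amsCDF n ℓ a x = (∫ u in (0 : ℝ)..(a - x), amsDensity n ℓ 0 u) + amsExactProb n ℓ 0 := by
  rcases eq_or_ne ℓ 0 with rfl | hℓ
  · simp [amsCDF, amsDensity, amsExactProb]
  · simp [amsCDF, amsExactProb, hℓ]

lemma amsCDF_sub_amsCDF_succ (n ℓ : ℕ) (a x : ℝ) :
    amsCDF n ℓ a x - amsCDF n (ℓ + 1) a x = amsExactProb n ℓ (a - x) := by
  have hint (k : ℕ) : IntervalIntegrable (amsDensity n k 0) MeasureTheory.volume 0 (a - x) :=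
    (by unfold amsDensity; fun_prop : Continuous (amsDensity n k 0)).intervalIntegrable _ _
  have hftc := intervalIntegral.integral_eq_sub_of_hasDerivAt
    (fun b _ => hasDerivAt_amsExactProb n ℓ b) ((hint ℓ).sub (hint (ℓ + 1)))
  rw [intervalIntegral.integral_sub (hint ℓ) (hint (ℓ + 1))] at hftc
  have hzero : amsExactProb n (ℓ + 1) 0 = 0 := by simp [amsExactProb]
  rw [amsCDF_eq_integral_add, amsCDF_eq_integral_add, hzero]
  linarith

lemma amsExactProb_eq_sum (n ℓ : ℕ) (b : ℝ) :
    amsExactProb n ℓ b =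
      ∑ i ∈ range (ℓ + 1), (n.choose ℓ * ℓ.choose i * (-1) ^ i) * exp (-(n - ℓ + i) * b) := by
  rw [amsExactProb, sub_eq_neg_add, add_pow, mul_sum, sum_mul]
  refine sum_congr rfl fun i _ => ?_
  have hexp : exp (-b) ^ i * exp (-(n - ℓ) * b) = exp (-(n - ℓ + i) * b) := by
    rw [← exp_nat_mul, ← exp_add]; ring_nf
  rw [neg_pow, one_pow, mul_one, ← hexp]
  ring

lemma iteratedDeriv_amsCDF_sub_amsCDF_succ (n ℓ m : ℕ) (a : ℝ) :
    iteratedDeriv m (fun x => amsCDF n ℓ a x - amsCDF n (ℓ + 1) a x) a =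
      n.choose ℓ * ∑ i ∈ range (ℓ + 1), ℓ.choose i * (-1) ^ i * ((n - ℓ : ℝ) + i) ^ m := by
  simp_rw [amsCDF_sub_amsCDF_succ, iteratedDeriv_comp_const_sub, sub_self,
    funext (amsExactProb_eq_sum n ℓ), iteratedDeriv_sum_mul_exp, mul_zero, exp_zero, mul_one,
    smul_eq_mul, mul_sum]
  refine sum_congr rfl fun i _ => ?_
  have hsign : (-1 : ℝ) ^ m * (-((n : ℝ) - ℓ + i)) ^ m = ((n : ℝ) - ℓ + i) ^ m := by
    rw [← mul_pow, neg_one_mul, neg_neg]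
  linear_combination (n.choose ℓ * ℓ.choose i * (-1) ^ i : ℝ) * hsign

theorem tendsto_deriv_amsCDF_diff_general (a : ℝ) (m ℓ : ℕ) :
    Tendsto (fun n : ℕ =>
      (1 / (n : ℝ) ^ m) *
        iteratedDeriv m (fun x => amsCDF n ℓ a x - amsCDF n (ℓ + 1) a x) a)
      atTop (nhds ((-1 : ℝ) ^ ℓ * (m.choose ℓ : ℝ))) := by
  have hlim := (tendsto_finsetSum (range (m + 1)) fun j _ =>
    (tendsto_fwdDiff_iter_pow_mul_choose_div_pow ℓ j (-ℓ)).const_mul (m.choose j : ℝ)).const_mul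
      ((-1 : ℝ) ^ ℓ)
  have hsum : ∑ j ∈ range (m + 1), (m.choose j : ℝ) * (if j = ℓ then 1 else 0) = m.choose ℓ := by
    simp only [mul_ite, mul_one, mul_zero, sum_ite_eq', mem_range, ite_eq_left_iff, not_lt]
    exact fun h => by rw [Nat.choose_eq_zero_of_lt (by omega), Nat.cast_zero]
  rw [hsum] at hlim
  refine hlim.congr' ?_
  filter_upwards [eventually_ne_atTop 0] with n hn
  rw [iteratedDeriv_amsCDF_sub_amsCDF_succ, sum_choose_mul_neg_one_pow_mul_shift (· ^ m),
    show (n - ℓ : ℝ) = -ℓ + n by ring, fwdDiff_iter_pow_add, mul_sum, mul_sum, mul_sum, mul_sum]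
  refine sum_congr rfl fun j hj => ?_
  have hpow : (n : ℝ) ^ (m - j) * (n : ℝ) ^ j = (n : ℝ) ^ m := by
    rw [← pow_add, Nat.sub_add_cancel (by simpa [Nat.lt_succ_iff] using hj)]
  field_simp
  rw [← hpow]
  ring

/-- `n^{−m}·(d^m/dx^m)[F_{n,ℓ}(a;x) − F_{n,ℓ+1}(a;x)]|_{x=a} → (−1)^ℓ·(m choose ℓ)`
as `n → ∞` (where `(m choose ℓ) = 0` if `ℓ > m`). -/
theorem tendsto_deriv_amsCDF_diff (a : ℝ) (ha : 0 < a) (m ℓ : ℕ) :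
    Tendsto (fun n : ℕ =>
      (1 / (n : ℝ) ^ m) *
        iteratedDeriv m (fun x => amsCDF n ℓ a x - amsCDF n (ℓ + 1) a x) a)
      atTop (nhds ((-1 : ℝ) ^ ℓ * (m.choose ℓ : ℝ))) :=
  tendsto_deriv_amsCDF_diff_general a m ℓ
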